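/- arXiv:2512.12835 — 2 statements merged into one kernel-verified Lean document; each statement's English description precedes it below -/
import Mathlib

section
/- Suppose U and W are ultrafilters on an ordinal κ, I ∈ W, and ⟨U_ξ : ξ ∈ I⟩ is a family of ultrafilters where each U_ξ is an ultrafilter on P(ξ) (concentrating on ξ), such that for every X ⊆ κ, X ∈ U if and only if {ξ ∈ I : X ∩ ξ ∈ U_ξ} ∈ W. Then the function f : P(κ) → P(κ) defined by f(X) = {ξ ∈ I : X ∩ ξ ∈ U_ξ} is super-Lipschitz and satisfies f⁻¹[W] = U; in particular U is super-Lipschitz reducible to W. -/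
/-- A function `f : P(κ) → P(κ)` is super-Lipschitz if for every `ξ < κ` and every `A ⊆ κ`,
`f(A) ∩ (ξ+1) = f(A ∩ ξ) ∩ (ξ+1)`. -/
def SuperLipschitz (κ : Ordinal) (f : Set Ordinal → Set Ordinal) : Prop :=
  ∀ ξ < κ, ∀ A : Set Ordinal,
    f A ∩ Set.Iio (ξ + 1) = f (A ∩ Set.Iio ξ) ∩ Set.Iio (ξ + 1)

/-- `W` is an ultrafilter on `P(κ)`. -/
def IsUltrafilterOn (κ : Ordinal) (W : Set (Set Ordinal)) : Prop :=
  (∀ A ∈ W, A ⊆ Set.Iio κ) ∧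
  (∀ A : Set Ordinal, A ⊆ Set.Iio κ → Xor' (A ∈ W) (Set.Iio κ \ A ∈ W)) ∧
  (∀ A ∈ W, ∀ B : Set Ordinal, B ⊆ Set.Iio κ → A ⊆ B → B ∈ W) ∧
  (∀ A ∈ W, ∀ B ∈ W, A ∩ B ∈ W)

/-- `f` is a super-Lipschitz reduction of `U` to `W`. -/
def IsSLReduction (κ : Ordinal) (f : Set Ordinal → Set Ordinal)
    (U W : Set (Set Ordinal)) : Prop :=
  SuperLipschitz κ f ∧
  (∀ A : Set Ordinal, A ⊆ Set.Iio κ → f A ⊆ Set.Iio κ) ∧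
  (∀ A : Set Ordinal, A ⊆ Set.Iio κ → (A ∈ U ↔ f A ∈ W))

/-! Whether `η ∈ f(X)` for `f(X) = {ξ ∈ I : X ∩ ξ ∈ U_ξ}` depends only on `X ∩ η`, and any map
with this property is super-Lipschitz, since `(A ∩ ξ) ∩ η = A ∩ η` for `η ≤ ξ`. The reduction
property `f⁻¹[W] = U` is the hypothesis on the family `⟨U_ξ⟩`, and `f(X) ⊆ I ⊆ κ`. -/

theorem superLipschitz_of_mem_iff_mem_inter_Iio {f : Set Ordinal → Set Ordinal}
    (hf : ∀ A η, η ∈ f A ↔ η ∈ f (A ∩ Set.Iio η)) (κ : Ordinal) : SuperLipschitz κ f := by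
  intro ξ _ A
  ext η
  simp only [Set.mem_inter_iff, Set.mem_Iio, and_congr_left_iff, Order.lt_add_one_iff]
  intro hηξ
  rw [hf A, hf (A ∩ Set.Iio ξ), Set.inter_assoc, Set.Iio_inter_Iio, min_eq_right hηξ]

theorem ketonen_witness_gives_superLipschitz_reduction_general
    (κ : Ordinal) (U W : Set (Set Ordinal)) (I : Set Ordinal)
    (hW : IsUltrafilterOn κ W) (hI : I ∈ W)
    (𝒰 : Ordinal → Set (Set Ordinal))
    (hker : ∀ X : Set Ordinal, X ⊆ Set.Iio κ →
      (X ∈ U ↔ {ξ | ξ ∈ I ∧ X ∩ Set.Iio ξ ∈ 𝒰 ξ} ∈ W)) :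
    IsSLReduction κ (fun X => {ξ | ξ ∈ I ∧ X ∩ Set.Iio ξ ∈ 𝒰 ξ}) U W := by
  have hcausal : ∀ (A : Set Ordinal) η, (η ∈ I ∧ A ∩ Set.Iio η ∈ 𝒰 η) ↔
      (η ∈ I ∧ A ∩ Set.Iio η ∩ Set.Iio η ∈ 𝒰 η) := by
    simp only [Set.inter_assoc, Set.inter_self, implies_true]
  refine ⟨superLipschitz_of_mem_iff_mem_inter_Iio hcausal κ, ?_, hker⟩
  exact fun _ _ => (Set.sep_subset I _).trans (hW.1 I hI)

/-- if `U, W` are ultrafilters on `κ`, `I ∈ W`, and `⟨U_ξ : ξ ∈ I⟩` is a family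
with each `U_ξ` an ultrafilter on `P(ξ)` such that `X ∈ U ↔ {ξ ∈ I : X ∩ ξ ∈ U_ξ} ∈ W`
for all `X ⊆ κ`, then `f(X) = {ξ ∈ I : X ∩ ξ ∈ U_ξ}` is a super-Lipschitz reduction of
`U` to `W`; in particular `U` is super-Lipschitz reducible to `W`. -/
theorem ketonen_witness_gives_superLipschitz_reduction
    (κ : Ordinal) (U W : Set (Set Ordinal)) (I : Set Ordinal)
    (hU : IsUltrafilterOn κ U) (hW : IsUltrafilterOn κ W) (hI : I ∈ W)
    (𝒰 : Ordinal → Set (Set Ordinal))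
    (h𝒰 : ∀ ξ ∈ I, IsUltrafilterOn ξ (𝒰 ξ))
    (hker : ∀ X : Set Ordinal, X ⊆ Set.Iio κ →
      (X ∈ U ↔ {ξ | ξ ∈ I ∧ X ∩ Set.Iio ξ ∈ 𝒰 ξ} ∈ W)) :
    IsSLReduction κ (fun X => {ξ | ξ ∈ I ∧ X ∩ Set.Iio ξ ∈ 𝒰 ξ}) U W :=
  ketonen_witness_gives_superLipschitz_reduction_general κ U W I hW hI 𝒰 hker
end

section
/- Suppose f : P(κ) → P(κ) is super-Lipschitz with f⁻¹[P(κ)\W] = U, where W is any subset of P(κ). Define a strategy for Player I in G_κ(W,U): at round i, having seen Player II's moves ⟨b(j) : j < i⟩, play a(i) = 1 if and only if i ∈ f({j < i : b(j) = 1}). Then this is a winning strategy for Player I: for any play ⟨a(i), b(i) : i < κ⟩ consistent with this strategy, {i : a(i)=1} ∈ W if and only if {j : b(j)=1} ∉ U. -/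
theorem SuperLipschitz.mem_iff_mem_inter_Iio {κ : Ordinal} {f : Set Ordinal → Set Ordinal}
    (hf : SuperLipschitz κ f) {i : Ordinal} (hi : i < κ) (A : Set Ordinal) :
    i ∈ f A ↔ i ∈ f (A ∩ Set.Iio i) := by
  have hii : i ∈ Set.Iio (i + 1) := Set.mem_Iio.mpr (Order.lt_add_one_iff.mpr le_rfl)
  simpa [hii] using Set.ext_iff.mp (hf i hi A) i

theorem setOf_lt_and_inter_Iio {α : Type*} [Preorder α] {p : α → Prop} {i κ : α} (hi : i ≤ κ) :
    {j | j < κ ∧ p j} ∩ Set.Iio i = {j | j < i ∧ p j} := by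
  ext j
  simp only [Set.mem_inter_iff, Set.mem_ofPred_eq, Set.mem_Iio]
  exact ⟨fun ⟨⟨_, hp⟩, hji⟩ => ⟨hji, hp⟩, fun ⟨hji, hp⟩ => ⟨⟨hji.trans_le hi, hp⟩, hji⟩⟩

theorem SuperLipschitz.setOf_play_eq {κ : Ordinal} {f : Set Ordinal → Set Ordinal}
    (hf : SuperLipschitz κ f) {a b : Ordinal → Bool}
    (hplay : ∀ i < κ, (a i = true ↔ i ∈ f {j | j < i ∧ b j = true})) :
    {i | i < κ ∧ a i = true} = f {j | j < κ ∧ b j = true} ∩ Set.Iio κ := by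
  ext i
  simp only [Set.mem_ofPred_eq, Set.mem_inter_iff, Set.mem_Iio]
  refine ⟨fun ⟨hi, hai⟩ => ⟨?_, hi⟩, fun ⟨hfi, hi⟩ => ⟨hi, ?_⟩⟩
  · rw [hf.mem_iff_mem_inter_Iio hi, setOf_lt_and_inter_Iio hi.le]
    exact (hplay i hi).mp hai
  · rw [hf.mem_iff_mem_inter_Iio hi, setOf_lt_and_inter_Iio hi.le] at hfi
    exact (hplay i hi).mpr hfi

/-- suppose `f : P(κ) → P(κ)` is super-Lipschitz with `f⁻¹[P(κ)\W] = U`.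
The strategy for Player I playing `a(i) = 1` iff `i ∈ f({j < i : b(j) = 1})` is winning:
for any play consistent with it, `{i : a(i)=1} ∈ W` iff `{j : b(j)=1} ∉ U`. -/
theorem reduction_gives_winning_strategy
    (κ : Ordinal) (U W : Set (Set Ordinal)) (f : Set Ordinal → Set Ordinal)
    (hf : SuperLipschitz κ f)
    (hrange : ∀ A : Set Ordinal, A ⊆ Set.Iio κ → f A ⊆ Set.Iio κ)
    (hred : ∀ A : Set Ordinal, A ⊆ Set.Iio κ →
      (A ∈ U ↔ f A ∈ ({X | X ⊆ Set.Iio κ} \ W)))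
    (a b : Ordinal → Bool)
    (hplay : ∀ i < κ, (a i = true ↔ i ∈ f {j | j < i ∧ b j = true})) :
    ({i | i < κ ∧ a i = true} ∈ W ↔ {j | j < κ ∧ b j = true} ∉ U) := by
  set B := {j | j < κ ∧ b j = true}
  have hB : B ⊆ Set.Iio κ := fun j hj => hj.1
  have hfB : f B ⊆ Set.Iio κ := hrange B hB
  rw [hf.setOf_play_eq hplay, Set.inter_eq_left.mpr hfB, hred B hB]
  simp only [Set.mem_sdiff, Set.mem_ofPred_eq, hfB, true_and, not_not]
end
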